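/- Let 0 < δ < 1 and define h_δ(u) = f_δ(√u)/√u for u > 0. Then for all ξ ∈ ℝ, the Fourier transform of h_δ satisfies ĥ_δ(ξ) = ∫_0^∞ h_δ(u) e^{−2πiξu} du = δ/√(1 + 2πiξ/δ) + (1−δ)/√(1 + 2πiξ/(1−δ)), where √ denotes the principal branch of the complex square root. -/

import Mathlib

open MeasureTheory Real Set

noncomputable section

/-- The centered Gaussian density `M_a(v) = e^{-v²/(2a)}/√(2πa)` with variance `a`. -/
def gaussM (a v : ℝ) : ℝ := Real.exp (-v ^ 2 / (2 * a)) / Real.sqrt (2 * π * a)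

/-- `f_δ = δ M_{1/(2δ)} + (1-δ) M_{1/(2(1-δ))}`. -/
def fdel (δ v : ℝ) : ℝ :=
  δ * gaussM (1 / (2 * δ)) v + (1 - δ) * gaussM (1 / (2 * (1 - δ))) v

/-- `h_δ(u) = f_δ(√u)/√u` (for `u > 0`). -/
def hdel (δ u : ℝ) : ℝ := fdel δ (Real.sqrt u) / Real.sqrt u


/-!
Substituting `u = x²` turns `∫₀^∞ h_δ(u) e^{-2πiξu} du` into `2 ∫₀^∞ f_δ(x) e^{-2πiξx²} dx`.
Each component of `f_δ` is `c M_{1/(2c)}(x) = c √(c/π) e^{-c x²}`, so each term is a half-line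
Gaussian integral `∫₀^∞ e^{-(c + 2πiξ) x²} dx = √(π / (c + 2πiξ)) / 2`; since `c > 0` is real,
the principal square root splits as `√(π/c) / √(1 + 2πiξ/c)`.
-/

open scoped Complex

theorem Complex.ofReal_mul_cpow_of_pos {r : ℝ} (hr : 0 < r) {z : ℂ} (hz : z ≠ 0) (s : ℂ) :
    ((r : ℂ) * z) ^ s = (r : ℂ) ^ s * z ^ s := by
  have hr' : (r : ℂ) ≠ 0 := Complex.ofReal_ne_zero.2 hr.ne'
  rw [Complex.cpow_def_of_ne_zero (mul_ne_zero hr' hz), Complex.cpow_def_of_ne_zero hr',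
    Complex.cpow_def_of_ne_zero hz, Complex.log_ofReal_mul hr hz, add_mul, Complex.exp_add,
    Complex.ofReal_log hr.le]

theorem pi_div_ofReal_mul_cpow_half {c : ℝ} (hc : 0 < c) {w : ℂ} (hw : 0 < w.re) :
    ((π : ℂ) / (c * w)) ^ (1 / 2 : ℂ) = √(π / c) * (w ^ (1 / 2 : ℂ))⁻¹ := by
  have hw0 : w ≠ 0 := fun h => by simp [h] at hw
  have hπc : 0 < π / c := div_pos pi_pos hc
  have harg : w.arg ≠ π := fun h => by
    have := (Complex.arg_eq_pi_iff.1 h).1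
    linarith
  rw [show (π : ℂ) / (c * w) = ((π / c : ℝ) : ℂ) * w⁻¹ by push_cast; field_simp,
    Complex.ofReal_mul_cpow_of_pos hπc (inv_ne_zero hw0), Complex.inv_cpow _ _ harg,
    sqrt_eq_rpow, Complex.ofReal_cpow hπc.le]
  norm_num

theorem integral_Ioi_inv_sqrt_smul_comp_sqrt {E : Type*} [NormedAddCommGroup E]
    [NormedSpace ℝ E] (g : ℝ → E) :
    ∫ u in Ioi 0, (√u)⁻¹ • g √u = (2 : ℝ) • ∫ x in Ioi 0, g x := by
  rw [← integral_comp_rpow_Ioi _ two_ne_zero, ← integral_smul]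
  refine setIntegral_congr_fun measurableSet_Ioi fun x (hx : 0 < x) => ?_
  rw [rpow_two, sqrt_sq hx.le, smul_smul, show (2 : ℝ) - 1 = 1 by norm_num, rpow_one]
  congr 1
  field_simp
  norm_num

theorem gaussM_one_div_two_mul (c x : ℝ) :
    gaussM (1 / (2 * c)) x = √(c / π) * exp (-c * x ^ 2) := by
  rcases eq_or_ne c 0 with rfl | hc
  · simp [gaussM]
  rw [gaussM, show 2 * π * (1 / (2 * c)) = (c / π)⁻¹ by field_simp, sqrt_inv,
    show -x ^ 2 / (2 * (1 / (2 * c))) = -c * x ^ 2 by field_simp, div_inv_eq_mul, mul_comm]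

theorem gaussM_mul_cexp (c x : ℝ) (z : ℂ) :
    (gaussM (1 / (2 * c)) x : ℂ) * cexp (-z * x ^ 2) = √(c / π) * cexp (-(c + z) * x ^ 2) := by
  rw [gaussM_one_div_two_mul, Complex.ofReal_mul, Complex.ofReal_exp, mul_assoc,
    ← Complex.exp_add]
  push_cast
  ring_nf

theorem integrable_gaussM_mul_cexp {c : ℝ} {z : ℂ} (hz : 0 < c + z.re) :
    Integrable fun x : ℝ => (gaussM (1 / (2 * c)) x : ℂ) * cexp (-z * x ^ 2) := by
  simp_rw [gaussM_mul_cexp]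
  exact (integrable_cexp_neg_mul_sq (by simpa using hz)).const_mul _

theorem integral_Ioi_gaussM_mul_cexp {c : ℝ} (hc : 0 < c) {z : ℂ} (hz : 0 < c + z.re) :
    ∫ x in Ioi 0, (gaussM (1 / (2 * c)) x : ℂ) * cexp (-z * x ^ 2)
      = ((1 + z / c) ^ (1 / 2 : ℂ))⁻¹ / 2 := by
  have hw : 0 < (1 + z / c).re := by
    simpa [add_div, hc.ne'] using div_pos hz hc
  simp_rw [gaussM_mul_cexp]
  rw [integral_const_mul, integral_gaussian_complex_Ioi (by simpa using hz),
    show (c : ℂ) + z = c * (1 + z / c) by field_simp [hc.ne'], pi_div_ofReal_mul_cpow_half hc hw]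
  have hsqrt : (√(c / π) : ℂ) * √(π / c) = 1 := by
    rw [← Complex.ofReal_mul, ← sqrt_mul (div_pos hc pi_pos).le,
      div_mul_div_cancel₀ pi_ne_zero, div_self hc.ne', sqrt_one, Complex.ofReal_one]
  linear_combination ((1 + z / c) ^ (1 / 2 : ℂ))⁻¹ / 2 * hsqrt

theorem integral_Ioi_fdel_mul_cexp {δ : ℝ} (hδ0 : 0 < δ) (hδ1 : δ < 1) {z : ℂ} (hz : 0 ≤ z.re) :
    ∫ x in Ioi 0, (fdel δ x : ℂ) * cexp (-z * x ^ 2)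
      = (δ * ((1 + z / δ) ^ (1 / 2 : ℂ))⁻¹ + (1 - δ) * ((1 + z / (1 - δ)) ^ (1 / 2 : ℂ))⁻¹) / 2 := by
  have hδ1' : 0 < 1 - δ := sub_pos.2 hδ1
  simp_rw [fdel, Complex.ofReal_add, Complex.ofReal_mul, add_mul, mul_assoc]
  rw [integral_add ((integrable_gaussM_mul_cexp (by linarith)).integrableOn.const_mul _)
      ((integrable_gaussM_mul_cexp (by linarith)).integrableOn.const_mul _),
    integral_const_mul, integral_const_mul, integral_Ioi_gaussM_mul_cexp hδ0 (by linarith),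
    integral_Ioi_gaussM_mul_cexp hδ1' (by linarith)]
  push_cast
  ring

theorem hdel_fourierTransform (δ : ℝ) (hδ0 : 0 < δ) (hδ1 : δ < 1) (ξ : ℝ) :
    ∫ u in Ioi (0 : ℝ),
        (hdel δ u : ℂ) * Complex.exp (-(2 : ℂ) * (π : ℂ) * Complex.I * (ξ : ℂ) * (u : ℂ))
      = (δ : ℂ) / ((1 + 2 * (π : ℂ) * Complex.I * (ξ : ℂ) / (δ : ℂ)) ^ ((1 : ℂ) / 2))
        + ((1 : ℂ) - (δ : ℂ)) /
            ((1 + 2 * (π : ℂ) * Complex.I * (ξ : ℂ) / ((1 : ℂ) - (δ : ℂ))) ^ ((1 : ℂ) / 2)) := by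
  set z : ℂ := 2 * π * Complex.I * ξ
  calc _ = ∫ u in Ioi 0, (√u)⁻¹ • ((fdel δ √u : ℂ) * cexp (-z * (√u : ℂ) ^ 2)) := by
        refine setIntegral_congr_fun measurableSet_Ioi fun u (hu : 0 < u) => ?_
        rw [← Complex.ofReal_pow, sq_sqrt hu.le, hdel, Complex.real_smul]
        simp only [z]
        push_cast
        ring_nf
    _ = (2 : ℝ) • ∫ x in Ioi 0, (fdel δ x : ℂ) * cexp (-z * x ^ 2) :=
        integral_Ioi_inv_sqrt_smul_comp_sqrt fun x => (fdel δ x : ℂ) * cexp (-z * x ^ 2)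
    _ = _ := by
        rw [integral_Ioi_fdel_mul_cexp hδ0 hδ1 (by simp [z]), Complex.real_smul]
        push_cast
        ring
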